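/- arXiv:1806.07981 — 7 statements merged into one kernel-verified Lean document; each statement's English description precedes it below -/
import Mathlib

section
/- For every non-square integer m > 1, there exist infinitely many pairs of positive integers (r, s) such that s(s+1)/2 = m · r(r+1)/2, i.e., infinitely many triangular numbers are m times another triangular number. -/
/-!
In the coordinates `x = 2s + 1`, `y = 2r + 1` the equation `s(s+1) = m r(r+1)` reads
`x² - m y² = 1 - m`, so multiplying `x + y√m` by a unit `u + v√m` of norm one keeps it a
solution. When `u` is odd and `v` is even, `x` and `y` stay odd, so we get a map on pairs
`(r, s)`. Such a unit is `u = 2a + 1`, `v = 2b` with `a(a+1) = m b²`, which is obtained by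
squaring a nontrivial Pell solution. Starting from `(0, 0)` the map strictly increases `r`.
-/

/-- Multiplication by the unit `(2a + 1) + 2b√m`, written on pairs `(r, s)`. -/
def triangularStep (m a b : ℤ) (p : ℤ × ℤ) : ℤ × ℤ :=
  ((2 * a + 1) * p.1 + 2 * b * p.2 + a + b,
    (2 * a + 1) * p.2 + 2 * m * b * p.1 + a + m * b)

section triangularStep

variable {m a b : ℤ} {p : ℤ × ℤ}

theorem triangularStep_mul_succ (hab : a * (a + 1) = m * b ^ 2)
    (hp : p.2 * (p.2 + 1) = m * (p.1 * (p.1 + 1))) :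
    (triangularStep m a b p).2 * ((triangularStep m a b p).2 + 1) =
      m * ((triangularStep m a b p).1 * ((triangularStep m a b p).1 + 1)) := by
  simp only [triangularStep]
  linear_combination ((2 * p.2 + 1) ^ 2 - m * (2 * p.1 + 1) ^ 2) * hab + hp

theorem lt_triangularStep (hm : 0 ≤ m) (ha : 0 < a) (hb : 0 < b) (hp₁ : 0 ≤ p.1)
    (hp₂ : 0 ≤ p.2) :
    p.1 < (triangularStep m a b p).1 ∧ p.2 < (triangularStep m a b p).2 := by
  simp only [triangularStep]
  constructor <;> nlinarith [mul_nonneg hm hb.le, mul_nonneg (mul_nonneg hm hb.le) hp₁]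

end triangularStep

theorem exists_mul_succ_eq_mul_sq {m : ℤ} (hm : 0 < m) (hns : ¬IsSquare m) :
    ∃ a b : ℤ, 0 < a ∧ 0 < b ∧ a * (a + 1) = m * b ^ 2 := by
  obtain ⟨x, y, hxy, hy⟩ := Pell.exists_of_not_isSquare hm hns
  have hx : x ≠ 0 := by
    rintro rfl
    nlinarith [mul_pos hm (pow_pos (abs_pos.mpr hy) 2), sq_abs y]
  refine ⟨m * y ^ 2, |x * y|, by positivity, abs_pos.mpr (mul_ne_zero hx hy), ?_⟩
  rw [sq_abs]
  linear_combination (-m * y ^ 2) * hxy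

/-- For every non-square integer m > 1, infinitely many pairs of positive
integers (r, s) satisfy s(s+1)/2 = m · r(r+1)/2. -/
theorem stmt_0 (m : ℤ) (hm : 1 < m) (hns : ¬ IsSquare m) :
    {p : ℤ × ℤ | 0 < p.1 ∧ 0 < p.2 ∧
      p.2 * (p.2 + 1) = m * (p.1 * (p.1 + 1))}.Infinite := by
  obtain ⟨a, b, ha, hb, hab⟩ := exists_mul_succ_eq_mul_sq (by omega) hns
  have step (p : ℤ × ℤ) (hp₁ : 0 ≤ p.1) (hp₂ : 0 ≤ p.2)
      (hp : p.2 * (p.2 + 1) = m * (p.1 * (p.1 + 1))) :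
      p.1 < (triangularStep m a b p).1 ∧ p.2 < (triangularStep m a b p).2 ∧
        (triangularStep m a b p).2 * ((triangularStep m a b p).2 + 1) =
          m * ((triangularStep m a b p).1 * ((triangularStep m a b p).1 + 1)) :=
    (lt_triangularStep (by omega) ha hb hp₁ hp₂).imp_right (⟨·, triangularStep_mul_succ hab hp⟩)
  have unbounded (n : ℕ) : ∃ p : ℤ × ℤ, n < p.1 ∧ 0 < p.2 ∧
      p.2 * (p.2 + 1) = m * (p.1 * (p.1 + 1)) := by
    induction n with
    | zero =>
      obtain ⟨h₁, h₂, h⟩ := step (0, 0) le_rfl le_rfl (by ring)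
      exact ⟨_, h₁, h₂, h⟩
    | succ n ih =>
      obtain ⟨p, hp₁, hp₂, hp⟩ := ih
      obtain ⟨h₁, h₂, h⟩ := step p (by omega) hp₂.le hp
      exact ⟨_, by omega, by omega, h⟩
  refine Set.Infinite.of_image Prod.fst (Set.infinite_of_forall_exists_gt fun N => ?_)
  obtain ⟨p, hp₁, hp₂, hp⟩ := unbounded N.toNat
  exact ⟨p.1, ⟨p, ⟨by omega, hp₂, hp⟩, rfl⟩, by omega⟩
end

section
/- For coprime square-free integers a > b ≥ 1 with ab not a perfect square, the equation a · r(r+1)/2 = b · s(s+1)/2 has infinitely many solutions in positive integers r, s. -/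
/-!
In the variables `x = 2r + 1`, `y = 2s + 1` the equation `a r(r+1) = b s(s+1)` reads
`a x² - b y² = a - b`, i.e. `N(x√a + y√b) = a - b`. Multiplication by a unit `u + v√(ab)` of norm
`1` preserves this norm; its square also preserves the parity of `x` and `y`, so it maps solutions
`(r, s)` to solutions. Pell's equation `u² - ab v² = 1` has a solution with `u > 1`, `v > 0`
because `ab` is not a square, and the resulting map strictly increases `r` on non-negative
solutions, so no positive solution has a largest `r`.
-/

/-- With `P = u² - 1`, `Q = buv`, `R = auv` this is `(x, y) ↦ ((2u² - 1)x + 2buv y, 2auv x + (2u² - 1)y)`,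
multiplication of `x√a + y√b` by `(u + v√(ab))²`, written in `r = (x - 1)/2`, `s = (y - 1)/2`. -/
def triangleStep (P Q R : ℤ) (p : ℤ × ℤ) : ℤ × ℤ :=
  ((2 * P + 1) * p.1 + 2 * Q * p.2 + P + Q, 2 * R * p.1 + (2 * P + 1) * p.2 + P + R)

section triangleStep

variable {a b P Q R : ℤ} {p : ℤ × ℤ}

theorem triangleStep_solution (hQR : a * Q = b * R) (hPQR : P * (P + 1) = Q * R)
    (hp : a * (p.1 * (p.1 + 1)) = b * (p.2 * (p.2 + 1))) :
    a * ((triangleStep P Q R p).1 * ((triangleStep P Q R p).1 + 1)) =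
      b * ((triangleStep P Q R p).2 * ((triangleStep P Q R p).2 + 1)) := by
  obtain ⟨r, s⟩ := p
  simp only [triangleStep] at hp ⊢
  linear_combination hp + ((2*P+1)*(2*r+1)*(2*s+1) + R*(2*r+1)^2 + Q*(2*s+1)^2) * hQR
    + (a*(2*r+1)^2 - b*(2*s+1)^2) * hPQR

theorem lt_triangleStep_fst (hP : 0 < P) (hQ : 0 < Q) (h₁ : 0 ≤ p.1) (h₂ : 0 ≤ p.2) :
    p.1 < (triangleStep P Q R p).1 := by
  simp only [triangleStep]
  nlinarith

theorem triangleStep_snd_pos (hP : 0 < P) (hR : 0 < R) (h₁ : 0 ≤ p.1) (h₂ : 0 ≤ p.2) :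
    0 < (triangleStep P Q R p).2 := by
  simp only [triangleStep]
  positivity

end triangleStep

theorem exists_triangleStep_coeffs {a b : ℤ} (ha : 0 < a) (hb : 0 < b) (hab : ¬IsSquare (a * b)) :
    ∃ P Q R : ℤ, 0 < P ∧ 0 < Q ∧ 0 < R ∧ a * Q = b * R ∧ P * (P + 1) = Q * R := by
  obtain ⟨w, hx, hy⟩ := Pell.Solution₁.exists_pos_of_not_isSquare (mul_pos ha hb) hab
  refine ⟨w.x ^ 2 - 1, b * w.x * w.y, a * w.x * w.y, by nlinarith, by positivity, by positivity,
    by ring, ?_⟩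
  linear_combination w.x ^ 2 * w.prop

theorem stmt_7_general (a b : ℤ) (hab : b < a) (hb : 1 ≤ b)
    (hns : ¬ IsSquare (a * b)) :
    {p : ℤ × ℤ | 0 < p.1 ∧ 0 < p.2 ∧
      a * (p.1 * (p.1 + 1)) = b * (p.2 * (p.2 + 1))}.Infinite := by
  obtain ⟨P, Q, R, hP, hQ, hR, hQR, hPQR⟩ := exists_triangleStep_coeffs (by omega) (by omega) hns
  set S := {p : ℤ × ℤ | 0 < p.1 ∧ 0 < p.2 ∧ a * (p.1 * (p.1 + 1)) = b * (p.2 * (p.2 + 1))}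
  have step_mem : ∀ p : ℤ × ℤ, 0 ≤ p.1 → 0 ≤ p.2 →
      a * (p.1 * (p.1 + 1)) = b * (p.2 * (p.2 + 1)) → triangleStep P Q R p ∈ S :=
    fun p h₁ h₂ hp => ⟨h₁.trans_lt (lt_triangleStep_fst hP hQ h₁ h₂),
      triangleStep_snd_pos hP hR h₁ h₂, triangleStep_solution hQR hPQR hp⟩
  intro hfin
  obtain ⟨p, ⟨hp₁, hp₂, hp⟩, hmax⟩ :=
    S.exists_max_image Prod.fst hfin ⟨_, step_mem (0, 0) le_rfl le_rfl (by ring)⟩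
  exact (lt_triangleStep_fst hP hQ hp₁.le hp₂.le).not_ge
    (hmax _ (step_mem p hp₁.le hp₂.le hp))

/-- For coprime square-free integers a > b ≥ 1 with ab not a perfect square,
a · r(r+1)/2 = b · s(s+1)/2 has infinitely many positive solutions. -/
theorem stmt_7 (a b : ℤ) (hab : b < a) (hb : 1 ≤ b)
    (hcop : IsCoprime a b) (hsa : Squarefree a) (hsb : Squarefree b)
    (hns : ¬ IsSquare (a * b)) :
    {p : ℤ × ℤ | 0 < p.1 ∧ 0 < p.2 ∧
      a * (p.1 * (p.1 + 1)) = b * (p.2 * (p.2 + 1))}.Infinite :=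
  stmt_7_general a b hab hb hns
end

section
/- Let ℓ ≥ 5 with ℓ ≡ 1 or 3 (mod 4), set q = 2ℓ − 4, and let m > 1 be a non-square integer. If there exists an integer solution (x, y) to x² − m y² = 1 with x > 0, y > 0, m y − x ≡ −1 (mod q) and x − y ≡ −1 (mod q), then there exist positive integers r, s with P(ℓ, r) = m · P(ℓ, s). -/
/-!
Completing the square, `8(ℓ-2) P(ℓ,r) + (ℓ-4)² = (q r - (ℓ-4))²`, turns `P(ℓ,r) = m P(ℓ,s)` into
the generalized Pell equation `X² - m Y² = (1-m)(ℓ-4)²` with `X = q r - (ℓ-4)`, `Y = q s - (ℓ-4)`.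
A Pell solution `(x, y)` yields one via `X = (ℓ-4)(m y - x)`, `Y = (ℓ-4)(x - y)`, because
`(m y - x)² - m (x - y)² = (1 - m)(x² - m y²)`; the congruences say exactly that these are
`≡ -(ℓ-4) (mod q)`, so `r = (ℓ-4)(m y - x + 1)/q` and `s = (ℓ-4)(x - y + 1)/q` are integers.
-/

/-- The r-th ℓ-gonal number. -/
def polygonal (ℓ r : ℤ) : ℤ := ((ℓ - 2) * r ^ 2 - (ℓ - 4) * r) / 2

theorem two_mul_polygonal (ℓ r : ℤ) :
    2 * polygonal ℓ r = (ℓ - 2) * r ^ 2 - (ℓ - 4) * r := by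
  obtain ⟨a, ha⟩ := Int.even_mul_pred_self r
  have : (ℓ - 2) * r ^ 2 - (ℓ - 4) * r = 2 * ((ℓ - 2) * a + r) := by
    linear_combination (ℓ - 2) * ha
  rw [polygonal, this, Int.mul_ediv_cancel_left _ two_ne_zero]

theorem polygonal_completing_square (ℓ r : ℤ) :
    8 * (ℓ - 2) * polygonal ℓ r + (ℓ - 4) ^ 2 = ((2 * ℓ - 4) * r - (ℓ - 4)) ^ 2 := by
  linear_combination 4 * (ℓ - 2) * two_mul_polygonal ℓ r

theorem polygonal_eq_mul_iff {ℓ : ℤ} (hℓ : ℓ ≠ 2) (m r s : ℤ) :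
    polygonal ℓ r = m * polygonal ℓ s ↔
      ((2 * ℓ - 4) * r - (ℓ - 4)) ^ 2 - m * ((2 * ℓ - 4) * s - (ℓ - 4)) ^ 2
        = (1 - m) * (ℓ - 4) ^ 2 := by
  rw [← polygonal_completing_square, ← polygonal_completing_square,
    ← mul_right_inj' (mul_ne_zero (by norm_num) (sub_ne_zero.mpr hℓ) : 8 * (ℓ - 2) ≠ 0)]
  constructor <;> intro h <;> linear_combination h

theorem polygonal_eq_mul_of_pell {ℓ m x y K J : ℤ} (hℓ : ℓ ≠ 2) (hpell : x ^ 2 - m * y ^ 2 = 1)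
    (hK : (2 * ℓ - 4) * K = m * y - x + 1) (hJ : (2 * ℓ - 4) * J = x - y + 1) :
    polygonal ℓ ((ℓ - 4) * K) = m * polygonal ℓ ((ℓ - 4) * J) := by
  have hX : (2 * ℓ - 4) * ((ℓ - 4) * K) - (ℓ - 4) = (ℓ - 4) * (m * y - x) := by
    linear_combination (ℓ - 4) * hK
  have hY : (2 * ℓ - 4) * ((ℓ - 4) * J) - (ℓ - 4) = (ℓ - 4) * (x - y) := by
    linear_combination (ℓ - 4) * hJ
  rw [polygonal_eq_mul_iff hℓ, hX, hY]
  linear_combination (1 - m) * (ℓ - 4) ^ 2 * hpell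

theorem lt_mul_of_sq_sub_mul_sq_eq_one {m x y : ℤ} (hm : 1 < m) (hy : 0 < y)
    (hpell : x ^ 2 - m * y ^ 2 = 1) : x < m * y := by
  have hmy : 0 < m * y := mul_pos (by linarith) hy
  refine lt_of_pow_lt_pow_left₀ 2 hmy.le ?_
  nlinarith [mul_pos (mul_pos hmy (by linarith : (0 : ℤ) < m - 1)) hy]

theorem lt_of_sq_sub_mul_sq_eq_one {m x y : ℤ} (hm : 1 ≤ m) (hx : 0 < x)
    (hpell : x ^ 2 - m * y ^ 2 = 1) : y < x := by
  refine lt_of_pow_lt_pow_left₀ 2 hx.le ?_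
  nlinarith [sq_nonneg y, abs_nonneg y, sq_abs y]

theorem stmt_10_general (ℓ m : ℤ) (hl : 5 ≤ ℓ)
    (hm : 1 < m)
    (h : ∃ x y : ℤ, 0 < x ∧ 0 < y ∧ x ^ 2 - m * y ^ 2 = 1 ∧
      m * y - x ≡ -1 [ZMOD (2 * ℓ - 4)] ∧ x - y ≡ -1 [ZMOD (2 * ℓ - 4)]) :
    ∃ r s : ℤ, 0 < r ∧ 0 < s ∧ polygonal ℓ r = m * polygonal ℓ s := by
  obtain ⟨x, y, hx, hy, hpell, hmyx, hxy⟩ := h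
  obtain ⟨K, hK⟩ := hmyx.symm.dvd
  obtain ⟨J, hJ⟩ := hxy.symm.dvd
  have hq : 0 < 2 * ℓ - 4 := by linarith
  have hKpos : 0 < K := pos_of_mul_pos_right
    (by linarith [lt_mul_of_sq_sub_mul_sq_eq_one hm hy hpell] : 0 < (2 * ℓ - 4) * K) hq.le
  have hJpos : 0 < J := pos_of_mul_pos_right
    (by linarith [lt_of_sq_sub_mul_sq_eq_one hm.le hx hpell] : 0 < (2 * ℓ - 4) * J) hq.le
  refine ⟨(ℓ - 4) * K, (ℓ - 4) * J, mul_pos (by linarith) hKpos,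
    mul_pos (by linarith) hJpos, ?_⟩
  exact polygonal_eq_mul_of_pell (by linarith) hpell (by linarith) (by linarith)

/-- If ℓ ≥ 5, ℓ ≡ 1 or 3 (mod 4), q = 2ℓ − 4, m > 1 non-square, and there is
a solution (x, y) of x² − m y² = 1 with x, y > 0, m y − x ≡ −1 and
x − y ≡ −1 (mod q), then P(ℓ, r) = m P(ℓ, s) for some positive r, s. -/
theorem stmt_10 (ℓ m : ℤ) (hl : 5 ≤ ℓ) (hl4 : ℓ % 4 = 1 ∨ ℓ % 4 = 3)
    (hm : 1 < m) (hns : ¬ IsSquare m)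
    (h : ∃ x y : ℤ, 0 < x ∧ 0 < y ∧ x ^ 2 - m * y ^ 2 = 1 ∧
      m * y - x ≡ -1 [ZMOD (2 * ℓ - 4)] ∧ x - y ≡ -1 [ZMOD (2 * ℓ - 4)]) :
    ∃ r s : ℤ, 0 < r ∧ 0 < s ∧ polygonal ℓ r = m * polygonal ℓ s :=
  stmt_10_general ℓ m hl hm h
end

section
/- There are no positive integers r, s with r(2r−1) = 2 · s(2s−1); that is, no hexagonal number is twice another hexagonal number. -/
/-!
Multiplying by 8 turns `r(2r-1) = 2s(2s-1)` into the negative Pell equation `x² + 1 = 2y²` with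
`x = 4r - 1`, `y = 4s - 1`. For a solution with `x ≥ 0` and `y ≥ 2`, the automorphism
`(x, y) ↦ (3x - 4y, 3y - 2x)` of the equation gives a solution with `0 < 3y - 2x < y`, and since
`x` is odd it preserves the class `y ≡ 1 (mod 4)`. Descending to `y = 1` shows that every positive
`y` is `1 (mod 4)`, whereas `4s - 1 ≡ 3 (mod 4)`.
-/

lemma odd_of_sq_add_one_eq_two_mul_sq {x y : ℤ} (h : x ^ 2 + 1 = 2 * y ^ 2) : Odd x :=
  (Int.odd_pow' two_ne_zero).mp ⟨y ^ 2 - 1, by linarith⟩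

lemma sq_add_one_eq_two_mul_sq_descent {x y : ℤ} (h : x ^ 2 + 1 = 2 * y ^ 2) :
    (3 * x - 4 * y) ^ 2 + 1 = 2 * (3 * y - 2 * x) ^ 2 := by
  linear_combination h

lemma descent_pos_and_lt {x y : ℤ} (h : x ^ 2 + 1 = 2 * y ^ 2) (hx : 0 ≤ x) (hy : 2 ≤ y) :
    0 < 3 * y - 2 * x ∧ 3 * y - 2 * x < y := by
  have hyx : y < x := by nlinarith
  have hxy : 2 * x < 3 * y := by nlinarith
  constructor <;> linarith

theorem emod_four_eq_one_of_sq_add_one_eq_two_mul_sq {x y : ℤ} (h : x ^ 2 + 1 = 2 * y ^ 2)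
    (hy : 0 < y) : y % 4 = 1 := by
  rcases (show 1 ≤ y by omega).eq_or_lt with rfl | hy2
  · rfl
  have habs : |x| ^ 2 + 1 = 2 * y ^ 2 := by rwa [sq_abs]
  obtain ⟨hpos, hlt⟩ := descent_pos_and_lt habs (abs_nonneg x) hy2
  have hdesc := emod_four_eq_one_of_sq_add_one_eq_two_mul_sq
    (sq_add_one_eq_two_mul_sq_descent habs) hpos
  have hodd : |x| % 2 = 1 := Int.odd_iff.mp (odd_abs.mpr (odd_of_sq_add_one_eq_two_mul_sq h))
  omega
termination_by y.toNat
decreasing_by omega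

/-- No hexagonal number is twice another hexagonal number. -/
theorem stmt_11 :
    ¬ ∃ r s : ℤ, 0 < r ∧ 0 < s ∧ r * (2 * r - 1) = 2 * (s * (2 * s - 1)) := by
  rintro ⟨r, s, -, hs, h⟩
  have hpell : (4 * r - 1) ^ 2 + 1 = 2 * (4 * s - 1) ^ 2 := by linear_combination 8 * h
  have := emod_four_eq_one_of_sq_add_one_eq_two_mul_sq hpell (by omega)
  omega
end

section
/- The pentagonal numbers P(5, r) = r(3r−1)/2 that are twice another pentagonal number are in bijection with the positive integer solutions of x² − 2y² = −1 with x ≡ y ≡ 5 (mod 6) (via x = 6r − 1, y = 6s − 1 where P(5, r) = 2P(5, s)). -/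
def pentagonalNum (r : ℤ) : ℤ := r * (3 * r - 1) / 2

theorem two_mul_pentagonalNum (r : ℤ) : 2 * pentagonalNum r = r * (3 * r - 1) := by
  have heven : Even (r * (3 * r - 1)) := by
    rw [show r * (3 * r - 1) = r * (r - 1) + 2 * r ^ 2 by ring]
    exact (Int.even_mul_pred_self r).add (even_two_mul _)
  exact Int.two_mul_ediv_two_of_even heven

/-- Completing the square: this turns `P(r) = 2 P(s)` into a Pell equation. -/
theorem six_mul_sub_one_sq (r : ℤ) : (6 * r - 1) ^ 2 = 24 * pentagonalNum r + 1 := by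
  linear_combination -12 * two_mul_pentagonalNum r

theorem pentagonalNum_eq_two_mul_iff (r s : ℤ) :
    pentagonalNum r = 2 * pentagonalNum s ↔ (6 * r - 1) ^ 2 - 2 * (6 * s - 1) ^ 2 = -1 := by
  rw [six_mul_sub_one_sq, six_mul_sub_one_sq]
  omega

theorem modEq_five_six_iff (x : ℤ) : x ≡ 5 [ZMOD 6] ↔ ∃ r, 6 * r - 1 = x := by
  refine ⟨fun h => ⟨(x + 1) / 6, ?_⟩, ?_⟩
  · unfold Int.ModEq at h
    omega
  · rintro ⟨r, rfl⟩
    unfold Int.ModEq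
    omega

/-- The map (r, s) ↦ (6r − 1, 6s − 1) is a bijection between pairs of positive
integers with P(5, r) = 2 P(5, s) and positive solutions of x² − 2y² = −1 with
x ≡ y ≡ 5 (mod 6). -/
theorem stmt_14 :
    Set.BijOn (fun p : ℤ × ℤ => (6 * p.1 - 1, 6 * p.2 - 1))
      {p : ℤ × ℤ | 0 < p.1 ∧ 0 < p.2 ∧ pentagonalNum p.1 = 2 * pentagonalNum p.2}
      {q : ℤ × ℤ | 0 < q.1 ∧ 0 < q.2 ∧ q.1 ^ 2 - 2 * q.2 ^ 2 = -1 ∧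
        q.1 ≡ 5 [ZMOD 6] ∧ q.2 ≡ 5 [ZMOD 6]} := by
  refine ⟨?_, ?_, ?_⟩
  · rintro ⟨r, s⟩ ⟨hr, hs, h⟩
    exact ⟨show 0 < 6 * r - 1 by omega, show 0 < 6 * s - 1 by omega,
      (pentagonalNum_eq_two_mul_iff r s).1 h,
      (modEq_five_six_iff _).2 ⟨r, rfl⟩, (modEq_five_six_iff _).2 ⟨s, rfl⟩⟩
  · rintro ⟨r, s⟩ - ⟨r', s'⟩ - h
    simp only [Prod.mk.injEq] at h ⊢
    omega
  · rintro ⟨x, y⟩ ⟨hx, hy, h, hx6, hy6⟩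
    obtain ⟨r, rfl⟩ := (modEq_five_six_iff x).1 hx6
    obtain ⟨s, rfl⟩ := (modEq_five_six_iff y).1 hy6
    exact ⟨(r, s), ⟨by omega, by omega, (pentagonalNum_eq_two_mul_iff r s).2 h⟩, rfl⟩
end

section
/- There exist infinitely many pairs of positive integers (r, s) with r(3r−1)/2 = 2 · s(3s−1)/2; that is, infinitely many pentagonal numbers are twice another pentagonal number. -/
/-!
With `x = 6r - 1` and `y = 6s - 1` the equation `r(3r - 1) = 2 s(3s - 1)` becomes the negative
Pell equation `x² - 2y² = -1`. Multiplication by the unit `(3 + 2√2)⁴ = 577 + 408√2` preserves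
the norm `x² - 2y²`, and since `577 ≡ 1`, `408 ≡ 0 (mod 6)` it also preserves `x ≡ y ≡ -1 (mod 6)`.
Translated back to `(r, s)` it is an affine map that sends solutions to strictly larger
solutions, so the orbit of `(7, 5)` is infinite.
-/

open Set Function

theorem Set.infinite_of_mapsTo_of_lt_comp {α β : Type*} [Preorder β] {s : Set α} {f : α → α}
    (g : α → β) (hs : s.Nonempty) (hf : MapsTo f s s) (hg : ∀ x ∈ s, g x < g (f x)) :
    s.Infinite := by
  obtain ⟨a, ha⟩ := hs
  have hmem : ∀ n, f^[n] a ∈ s := fun n => hf.iterate n ha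
  have hmono : StrictMono fun n => g (f^[n] a) := strictMono_nat_of_lt_succ fun n => by
    rw [iterate_succ_apply']
    exact hg _ (hmem n)
  exact infinite_of_injective_forall_mem hmono.injective.of_comp hmem

def pentagonalDoubles : Set (ℤ × ℤ) :=
  {p | 0 < p.1 ∧ 0 < p.2 ∧ p.1 * (3 * p.1 - 1) = 2 * (p.2 * (3 * p.2 - 1))}

def pentStep (p : ℤ × ℤ) : ℤ × ℤ :=
  (577 * p.1 + 816 * p.2 - 232, 408 * p.1 + 577 * p.2 - 164)

lemma fst_lt_pentStep_fst {p : ℤ × ℤ} (hp : p ∈ pentagonalDoubles) : p.1 < (pentStep p).1 := by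
  obtain ⟨hr, hs, -⟩ := hp
  simp only [pentStep]
  linarith

lemma mapsTo_pentStep : MapsTo pentStep pentagonalDoubles pentagonalDoubles := by
  rintro p ⟨hr, hs, heq⟩
  simp only [pentagonalDoubles, pentStep, mem_ofPred_eq]
  exact ⟨by linarith, by linarith, by linear_combination heq⟩

/-- Infinitely many pentagonal numbers are twice another pentagonal number. -/
theorem stmt_15 :
    {p : ℤ × ℤ | 0 < p.1 ∧ 0 < p.2 ∧
      p.1 * (3 * p.1 - 1) = 2 * (p.2 * (3 * p.2 - 1))}.Infinite :=
  Set.infinite_of_mapsTo_of_lt_comp (s := pentagonalDoubles) Prod.fst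
    ⟨(7, 5), by norm_num [pentagonalDoubles]⟩ mapsTo_pentStep fun _ => fst_lt_pentStep_fst
end

section
/- If positive integers r, s, t satisfy (ar−b)² − m(as−b)² = −(m−1)b² and (ar−b)² − n(at−b)² = −(n−1)b², then with u = ar−b, v = as−b, w = at−b, X = m²n v², and Y = m²n² u v w, one has Y² = X(X − mn(m−1)b²)(X − mn(m−n)b²). -/
/-!
The two quadratic relations make both shifted abscissae perfect squares up to a factor:
`X - mn(m-1)b² = mn u²` and `X - mn(m-n)b² = mn² w²`. Hence the cubic equals
`m²n v² · mn u² · mn² w² = (m²n² u v w)²`.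
-/

theorem sq_eq_cubic_of_sq_sub_mul_sq {R : Type*} [CommRing R] {m n b u v w : R}
    (h1 : u ^ 2 - m * v ^ 2 = -(m - 1) * b ^ 2)
    (h2 : u ^ 2 - n * w ^ 2 = -(n - 1) * b ^ 2) :
    (m ^ 2 * n ^ 2 * u * v * w) ^ 2 =
      m ^ 2 * n * v ^ 2 * (m ^ 2 * n * v ^ 2 - m * n * (m - 1) * b ^ 2)
        * (m ^ 2 * n * v ^ 2 - m * n * (m - n) * b ^ 2) := by
  have hu : m ^ 2 * n * v ^ 2 - m * n * (m - 1) * b ^ 2 = m * n * u ^ 2 := by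
    linear_combination -(m * n) * h1
  have hw : m ^ 2 * n * v ^ 2 - m * n * (m - n) * b ^ 2 = m * n ^ 2 * w ^ 2 := by
    linear_combination -(m * n) * h1 + m * n * h2
  rw [hu, hw]
  ring

theorem stmt_17_general (a b m n r s t : ℤ)
    (h1 : (a * r - b) ^ 2 - m * (a * s - b) ^ 2 = -(m - 1) * b ^ 2)
    (h2 : (a * r - b) ^ 2 - n * (a * t - b) ^ 2 = -(n - 1) * b ^ 2)
    (u v w X Y : ℤ)
    (hu : u = a * r - b) (hv : v = a * s - b) (hw : w = a * t - b)
    (hX : X = m ^ 2 * n * v ^ 2) (hY : Y = m ^ 2 * n ^ 2 * u * v * w) :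
    Y ^ 2 = X * (X - m * n * (m - 1) * b ^ 2)
              * (X - m * n * (m - n) * b ^ 2) := by
  subst hX hY hu hv hw
  exact sq_eq_cubic_of_sq_sub_mul_sq h1 h2

/-- If (ar−b)² − m(as−b)² = −(m−1)b² and (ar−b)² − n(at−b)² = −(n−1)b², then
with u = ar−b, v = as−b, w = at−b, X = m²n v², Y = m²n² u v w, one has
Y² = X(X − mn(m−1)b²)(X − mn(m−n)b²). -/
theorem stmt_17 (a b m n r s t : ℤ) (hmn : n < m) (hn : 1 < n)
    (hr : 0 < r) (hs : 0 < s) (ht : 0 < t)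
    (h1 : (a * r - b) ^ 2 - m * (a * s - b) ^ 2 = -(m - 1) * b ^ 2)
    (h2 : (a * r - b) ^ 2 - n * (a * t - b) ^ 2 = -(n - 1) * b ^ 2)
    (u v w X Y : ℤ)
    (hu : u = a * r - b) (hv : v = a * s - b) (hw : w = a * t - b)
    (hX : X = m ^ 2 * n * v ^ 2) (hY : Y = m ^ 2 * n ^ 2 * u * v * w) :
    Y ^ 2 = X * (X - m * n * (m - 1) * b ^ 2)
              * (X - m * n * (m - n) * b ^ 2) :=
  stmt_17_general a b m n r s t h1 h2 u v w X Y hu hv hw hX hY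
end
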